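/- CLA1 proves the formula ⊓x⊓y⊔z(y×x=z); that is, the problem of computing the product of any two natural numbers is provable in the computability-logic-based arithmetic CLA1. -/

import Mathlib

/-!
Constructive Induction on `x` in `⊓y⊔z (y × x = z)`. For `x = 0` the machine answers `0`, by the
axiom `y × 0 = 0`. In the step it waits for `y`, asks the induction hypothesis for `a = y × x` and
the addition problem `⊓x⊓y⊔z (y + x = z)` for `b = a + y`, and answers `b`, which is `y × x'` by
the axiom `y × x' = y × x + y`. Addition is obtained in the same way from `y + 0 = y`,
`y + x' = (y + x)'` and the successor axiom `⊓x⊔y (y = x')`. Each Logical Consequence step is a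
CL12-proof that alternates Wait (for the environment's choices) with `⊓`- and `⊔`-Choose, and ends
in an elementary sequent that is a classical consequence of the axioms.
-/

namespace CoL

attribute [local instance 10] Classical.propDecidable

noncomputable section

/-! ## Players, moves, runs -/

/-- The two players: the machine `⊤` and the environment `⊥`. -/
inductive Player where
  | top
  | bot
deriving DecidableEq, Inhabited

/-- The adversary of a player. -/
def Player.opp : Player → Player
  | .top => .bot
  | .bot => .top

/-- Moves, with enough structure for choice/parallel/dfb-style prefixed moves. -/
inductive Move where
  | choice : ℕ → Move
  | par : Bool → Move → Move
  | succd : Move → Move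
  | ante : List Bool → Move → Move
  | repl : List Bool → Move
deriving DecidableEq, Inhabited

/-- A labeled move: a move together with the player who made it. -/
structure Labmove where
  player : Player
  move : Move
deriving DecidableEq, Inhabited

/-- A run: a finite or infinite sequence of labeled moves.  A position is a finite run,
represented by a `List Labmove`. -/
inductive RunT where
  | fin : List Labmove → RunT
  | inf : (ℕ → Labmove) → RunT

namespace RunT

def get : RunT → ℕ → Option Labmove
  | .fin l, n => l[n]?
  | .inf f, n => some (f n)

def take : RunT → ℕ → List Labmove
  | .fin l, n => l.take n
  | .inf f, n => (List.range n).map f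

def hasPrefix (Γ : RunT) (Φ : List Labmove) : Prop := Γ.take Φ.length = Φ

end RunT

/-- Switch the label of a labmove to the adversary's. -/
def Labmove.flip (lm : Labmove) : Labmove := ⟨lm.player.opp, lm.move⟩

def RunT.flip : RunT → RunT
  | .fin l => .fin (l.map Labmove.flip)
  | .inf f => .inf fun n => (f n).flip

theorem not_infinite_bound {P : ℕ → Prop} (h : ¬ (setOf P).Infinite) :
    ∃ N : ℕ, ∀ n, P n → n < N := by
  rw [Set.not_infinite] at h
  obtain ⟨N, hN⟩ := h.bddAbove
  exact ⟨N + 1, fun n hn => Nat.lt_succ_of_le (hN hn)⟩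

/-- The subsequence of a run obtained by a partial relabeling function, with the
surviving moves reindexed consecutively (in the original order). -/
def RunT.fmap (g : Labmove → Option Labmove) : RunT → RunT
  | .fin l => .fin (l.filterMap g)
  | .inf f =>
    if h : {n | (g (f n)).isSome = true}.Infinite then
      .inf fun k => (g (f (Nat.nth (fun n => (g (f n)).isSome = true) k))).getD default
    else
      .fin ((List.range (not_infinite_bound h).choose).filterMap fun n => g (f n))

/-- A run contains only finitely many labmoves satisfying `P`. -/
def RunT.finMany (P : Labmove → Prop) : RunT → Prop
  | .fin _ => True
  | .inf f => {n | P (f n)}.Finite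

/-- The position (index) of the `k`-th (0-based) natural number satisfying `P`,
if it exists. -/
def kthIdx (P : ℕ → Prop) (k : ℕ) : Option ℕ :=
  if h : ∃ n, P n ∧ {m | m < n ∧ P m}.ncard = k then some (Nat.find h) else none

/-! ## Constant games -/

/-- A constant game: a set of legal (finite) positions together with a winner
function on runs.  (Legality of arbitrary runs is derived: a run is legal iff all its
finite initial segments are legal positions.) -/
structure ConstGame where
  legalPos : List Labmove → Prop
  wn : RunT → Player

namespace ConstGame

/-- A run is legal iff every finite initial segment of it is a legal position. -/
def legal (A : ConstGame) (Γ : RunT) : Prop := ∀ n, A.legalPos (Γ.take n)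

/-- A run is `p`-illegal iff the last move of its shortest illegal initial segment is
`p`-labeled. -/
def illegalFor (A : ConstGame) (p : Player) (Γ : RunT) : Prop :=
  ∃ (Φ : List Labmove) (lm : Labmove),
    Γ.hasPrefix (Φ ++ [lm]) ∧ A.legalPos Φ ∧ ¬ A.legalPos (Φ ++ [lm]) ∧ lm.player = p

/-- A run is won by `p` iff it is illegal with the adversary the offender, or it is a
legal run whose winner is `p`. -/
def wonBy (A : ConstGame) (p : Player) (Γ : RunT) : Prop :=
  A.illegalFor p.opp Γ ∨ (A.legal Γ ∧ A.wn Γ = p)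

end ConstGame

/-- The `n`-th entry of the run exists and is `q`-labeled. -/
def RunT.playerAt (Γ : RunT) (q : Player) (n : ℕ) : Prop :=
  ∃ lm, Γ.get n = some lm ∧ lm.player = q

/-- Index of the `k`-th `q`-labeled move of a run. -/
def RunT.kthPlayerIdx (Γ : RunT) (q : Player) (k : ℕ) : Option ℕ := kthIdx (Γ.playerAt q) k

/-- The `k`-th `q`-labeled move of a run. -/
def RunT.kthPlayerMove (Γ : RunT) (q : Player) (k : ℕ) : Option Move :=
  (Γ.kthPlayerIdx q k).bind fun n => (Γ.get n).map Labmove.move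

/-- `Δ` is a `p`-delay of `Γ`: both players' subsequences of moves agree, and whenever
the `k`-th `p`-labeled move occurs later than the `n`-th `¬p`-labeled move in `Γ`,
so does it in `Δ`. -/
def IsDelay (p : Player) (Γ Δ : RunT) : Prop :=
  (∀ (q : Player) (k : ℕ), Γ.kthPlayerMove q k = Δ.kthPlayerMove q k) ∧
  (∀ (k n a b c d : ℕ),
    Γ.kthPlayerIdx p k = some a → Γ.kthPlayerIdx p.opp n = some b →
    Δ.kthPlayerIdx p k = some c → Δ.kthPlayerIdx p.opp n = some d →
    b < a → d < c)

/-- A constant game is static. -/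
def ConstGame.Static (A : ConstGame) : Prop :=
  ∀ (p : Player) (Γ Δ : RunT), IsDelay p Γ Δ →
    (¬ A.illegalFor p Γ → ¬ A.illegalFor p Δ) ∧ (A.wonBy p Γ → A.wonBy p Δ)

/-- Valuations: assignments of constants (natural numbers) to variables. -/
abbrev Valuation := ℕ → ℕ

/-- A game: a function from valuations to constant games. -/
abbrev Game := Valuation → ConstGame

/-- A game is static iff all of its instances are. -/
def Game.Static (A : Game) : Prop := ∀ e, (A e).Static

/-! ## Machines: EPMs and BMEPMs -/

/-- An action of an EPM at a step: make a (single) move, grant permission, or keep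
computing. -/
inductive EAct where
  | move : Move → EAct
  | permit
  | think

/-- An easy-play machine, abstracted as a deterministic interactive algorithm: its
action is a function of the valuation, the current position (run-tape content), and the
clock cycle. -/
structure EPM where
  act : Valuation → List Labmove → ℕ → EAct

/-- The position after `t` steps of a play of EPM `M` on valuation `e`, where `env t`
is the environment's (optional, single) response upon a permission granted at step
`t`. -/
def EPM.pos (M : EPM) (e : Valuation) (env : ℕ → Option Move) : ℕ → List Labmove
  | 0 => []
  | t + 1 =>
    match M.act e (M.pos e env t) t with
    | .move m => M.pos e env t ++ [⟨.top, m⟩]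
    | .permit => M.pos e env t ++ (env t).toList.map fun m => ⟨.bot, m⟩
    | .think => M.pos e env t

def spelledGet (pos : ℕ → List Labmove) (n : ℕ) : Option Labmove :=
  if h : ∃ t, n < (pos t).length then (pos (Nat.find h))[n]? else none

/-- The run incrementally spelled by a monotone sequence of positions. -/
def spelled (pos : ℕ → List Labmove) : RunT :=
  if h : ∃ t, ∀ s, (pos s).length ≤ (pos t).length then .fin (pos (Nat.find h))
  else .inf fun n => (spelledGet pos n).getD default

/-- A computation branch is fair iff permission is granted infinitely many times. -/
def EPM.Fair (M : EPM) (e : Valuation) (env : ℕ → Option Move) : Prop :=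
  ∀ N, ∃ t, N ≤ t ∧ M.act e (M.pos e env t) t = .permit

/-- `M ⊨ₑ A`: machine `M` wins game `A` on valuation `e`. -/
def EPM.WinsOn (M : EPM) (A : Game) (e : Valuation) : Prop :=
  ∀ env : ℕ → Option Move,
    ¬ (A e).illegalFor .bot (spelled (M.pos e env)) →
      M.Fair e env ∧ (A e).wonBy .top (spelled (M.pos e env))

/-- `M ⊨ A`: `M` wins `A` on every valuation. -/
def EPM.Wins (M : EPM) (A : Game) : Prop := ∀ e, M.WinsOn A e

/-- An action of a block-move EPM: make a finite block of moves, grant permission, or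
keep computing. -/
inductive BAct where
  | moves : List Move → BAct
  | permit
  | think

/-- A block-move EPM: like an EPM, but either player may make a finite block of moves
at a time. -/
structure BMEPM where
  act : Valuation → List Labmove → ℕ → BAct

def BMEPM.pos (M : BMEPM) (e : Valuation) (env : ℕ → List Move) : ℕ → List Labmove
  | 0 => []
  | t + 1 =>
    match M.act e (M.pos e env t) t with
    | .moves ms => M.pos e env t ++ ms.map fun m => ⟨.top, m⟩
    | .permit => M.pos e env t ++ (env t).map fun m => ⟨.bot, m⟩
    | .think => M.pos e env t

def BMEPM.Fair (M : BMEPM) (e : Valuation) (env : ℕ → List Move) : Prop :=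
  ∀ N, ∃ t, N ≤ t ∧ M.act e (M.pos e env t) t = .permit

/-- `M ⊨ₑ A` for a BMEPM. -/
def BMEPM.WinsOn (M : BMEPM) (A : Game) (e : Valuation) : Prop :=
  ∀ env : ℕ → List Move,
    ¬ (A e).illegalFor .bot (spelled (M.pos e env)) →
      M.Fair e env ∧ (A e).wonBy .top (spelled (M.pos e env))

def BMEPM.Wins (M : BMEPM) (A : Game) : Prop := ∀ e, M.WinsOn A e

/-- A game is computable iff some EPM wins it. -/
def Game.Computable (A : Game) : Prop := ∃ M : EPM, M.Wins A

/-! ## Game operations -/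

/-- The elementary game with no nonempty legal runs, won by `⊤` iff `P` holds. -/
def elemGame (P : Prop) : ConstGame where
  legalPos Φ := Φ = []
  wn _ := if P then .top else .bot

/-- Negation: the roles of the two players are interchanged. -/
def gNeg (A : ConstGame) : ConstGame where
  legalPos Φ := A.legalPos (Φ.map Labmove.flip)
  wn Γ := (A.wn Γ.flip).opp

def projPar (b : Bool) : Labmove → Option Labmove
  | ⟨p, .par b' β⟩ => if b' = b then some ⟨p, β⟩ else none
  | _ => none

/-- Parallel (binary) conjunction of constant games. -/
def gameAnd (A B : ConstGame) : ConstGame where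
  legalPos Φ :=
    (∀ lm ∈ Φ, ∃ b β, lm.move = Move.par b β) ∧
    A.legalPos (Φ.filterMap (projPar false)) ∧ B.legalPos (Φ.filterMap (projPar true))
  wn Γ :=
    if A.wn (Γ.fmap (projPar false)) = .top ∧ B.wn (Γ.fmap (projPar true)) = .top
    then .top else .bot

/-- Choice conjunction over an index set `S`: `⊥` chooses `n ∈ S` and play continues
in `f n`; if no choice is ever made, `⊤` wins. -/
def gameCAnd (S : Set ℕ) (f : ℕ → ConstGame) : ConstGame where
  legalPos := fun Φ =>
    match Φ with
    | [] => True
    | ⟨.bot, .choice n⟩ :: rest => n ∈ S ∧ (f n).legalPos rest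
    | _ => False
  wn := fun Γ =>
    match Γ with
    | .fin [] => .top
    | .fin (⟨.bot, .choice n⟩ :: rest) => (f n).wn (.fin rest)
    | .fin (_ :: _) => .top
    | .inf g =>
      match g 0 with
      | ⟨.bot, .choice n⟩ => (f n).wn (.inf fun k => g (k + 1))
      | _ => .top

/-- Blind universal quantification (for unistructural families of games). -/
def gameAll (f : ℕ → ConstGame) : ConstGame where
  legalPos Φ := ∀ c, (f c).legalPos Φ
  wn Γ := if ∀ c, (f c).wn Γ = .top then .top else .bot

/-! ## Trees of games and dfb-reduction -/

/-- A tree of (constant) games. -/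
inductive GTree where
  | leaf : ConstGame → GTree
  | node : GTree → GTree → GTree

/-- The leaves of a tree of games, together with their (bit-string) addresses. -/
def GTree.leaves : GTree → List (List Bool × ConstGame)
  | .leaf A => [([], A)]
  | .node l r =>
      (l.leaves.map fun p => (false :: p.1, p.2)) ++ (r.leaves.map fun p => (true :: p.1, p.2))

/-- `w` is a prefix of the infinite bit string `x`. -/
def prefInf (w : List Bool) (x : ℕ → Bool) : Prop :=
  ∀ (i : ℕ) (hi : i < w.length), w.get ⟨i, hi⟩ = x i

/-- Projection to the succedent: keep labmoves `℘S.β`, stripping the prefix. -/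
def projS : Labmove → Option Labmove
  | ⟨p, .succd β⟩ => some ⟨p, β⟩
  | _ => none

/-- Projection along an infinite bit string `x`: keep labmoves `℘w.β` with `w ≼ x`,
stripping the prefix. -/
def projA (x : ℕ → Bool) : Labmove → Option Labmove
  | ⟨p, .ante w β⟩ => if prefInf w x then some ⟨p, β⟩ else none
  | _ => none

/-- Shape/precedence conditions on the `i`-th labmove of a position of a dfb-reduction
(conditions 1-3 of the definition of dfb-reduction). -/
def dfbShape (T : GTree) (Φ : List Labmove) (i : ℕ) : Labmove → Prop
  | ⟨_, .succd _⟩ => True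
  | ⟨.top, .repl w⟩ =>
      (∃ p ∈ T.leaves, p.1 = w) ∨
      (w ≠ [] ∧ ∃ j < i, Φ[j]? = some ⟨.top, .repl w.dropLast⟩)
  | ⟨.bot, .repl _⟩ => False
  | ⟨_, .ante w _⟩ =>
      (∃ p ∈ T.leaves, w <+: p.1) ∨
      (w ≠ [] ∧ ∃ j < i, Φ[j]? = some ⟨.top, .repl w.dropLast⟩)
  | ⟨_, .choice _⟩ => False
  | ⟨_, .par _ _⟩ => False

/-- Legal positions of the dfb-reduction `T ∘̸– B`. -/
def dfbLegalPos (T : GTree) (B : ConstGame) (Φ : List Labmove) : Prop :=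
  (∀ (i : ℕ) (lm : Labmove), Φ[i]? = some lm → dfbShape T Φ i lm) ∧
  (∀ w : List Bool, Φ.count ⟨Player.top, Move.repl w⟩ ≤ 1) ∧
  B.legalPos (Φ.filterMap projS) ∧
  (∀ p ∈ T.leaves, ∀ x : ℕ → Bool, prefInf p.1 x →
      (gNeg p.2).legalPos (Φ.filterMap (projA x)))

/-- Replicative labmoves. -/
def isReplMove (lm : Labmove) : Prop := ∃ w, lm.move = Move.repl w

/-- The dfb-reduction of game `B` to the tree of games `T`.  `⊤` wins a legal run iff
it has made only finitely many replications and either wins in the succedent or wins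
(as `⊥`) in some antecedental leaf. -/
def dfb (T : GTree) (B : ConstGame) : ConstGame where
  legalPos := dfbLegalPos T B
  wn Γ :=
    if Γ.finMany isReplMove ∧
       (B.wn (Γ.fmap projS) = .top ∨
        ∃ p ∈ T.leaves, ∃ x : ℕ → Bool, prefInf p.1 x ∧
          (gNeg p.2).wn (Γ.fmap (projA x)) = .top)
    then .top else .bot

/-! ## Syntax: terms, formulas, sequents -/

/-- Function symbols: an arity and an index (infinitely many of each arity). -/
structure FuncSym where
  ar : ℕ
  idx : ℕ
deriving DecidableEq

/-- Predicate symbols: the logical symbol `=` plus infinitely many nonlogical symbols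
of each arity. -/
inductive PredSym where
  | eq
  | pred : ℕ → ℕ → PredSym
deriving DecidableEq

def PredSym.arity : PredSym → ℕ
  | .eq => 2
  | .pred n _ => n

/-- Terms: variables, constants (decimal numerals, i.e. natural numbers), and
applications of function symbols. -/
inductive Term where
  | var : ℕ → Term
  | const : ℕ → Term
  | func : (f : FuncSym) → (Fin f.ar → Term) → Term

/-- Formulas.  `¬` is only applied to atoms: an atom carries a polarity bit
(`true` = negated).  `→` is an abbreviation (see `Fml.imp`). -/
inductive Fml where
  | tt
  | ff
  | atom : Bool → (p : PredSym) → (Fin p.arity → Term) → Fml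
  | and : Fml → Fml → Fml
  | or : Fml → Fml → Fml
  | cand : Fml → Fml → Fml
  | cor : Fml → Fml → Fml
  | all : ℕ → Fml → Fml
  | ex : ℕ → Fml → Fml
  | call : ℕ → Fml → Fml
  | cex : ℕ → Fml → Fml

def duo {α : Sort*} (a b : α) : Fin 2 → α := fun i => if i.val = 0 then a else b

/-- An interpretation: sends function symbols to functions on `ℕ` and predicate symbols
to elementary games (predicates), such that `=` is interpreted as an equivalence
relation preserved by all interpreted functions and respected by all interpreted
predicates. -/
structure Interp where
  fn : (f : FuncSym) → (Fin f.ar → ℕ) → ℕ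
  pr : (p : PredSym) → (Fin p.arity → ℕ) → Prop
  eq_equiv : Equivalence fun a b => pr .eq (duo a b)
  fn_congr : ∀ (f : FuncSym) (u v : Fin f.ar → ℕ),
      (∀ i, pr .eq (duo (u i) (v i))) → pr .eq (duo (fn f u) (fn f v))
  pr_congr : ∀ (p : PredSym) (u v : Fin p.arity → ℕ),
      (∀ i, pr .eq (duo (u i) (v i))) → (pr p u ↔ pr p v)

def Term.eval (I : Interp) (e : Valuation) : Term → ℕ
  | .var x => e x
  | .const c => c
  | .func f ts => I.fn f fun i => (ts i).eval I e

def Valuation.upd (e : Valuation) (x c : ℕ) : Valuation := fun y => if y = x then c else e y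

/-- The game `F*` represented by a formula `F` under an interpretation `*`. -/
def Fml.game (I : Interp) : Fml → Valuation → ConstGame
  | .tt, _ => elemGame True
  | .ff, _ => elemGame False
  | .atom b p a, e => elemGame ((I.pr p fun i => (a i).eval I e) ↔ b = false)
  | .and A B, e => gameAnd (A.game I e) (B.game I e)
  | .or A B, e => gNeg (gameAnd (gNeg (A.game I e)) (gNeg (B.game I e)))
  | .cand A B, e => gameCAnd {n | n = 0 ∨ n = 1} fun n =>
      if n = 0 then A.game I e else B.game I e
  | .cor A B, e => gNeg (gameCAnd {n | n = 0 ∨ n = 1} fun n =>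
      gNeg (if n = 0 then A.game I e else B.game I e))
  | .all x A, e => gameAll fun c => A.game I (e.upd x c)
  | .ex x A, e => gNeg (gameAll fun c => gNeg (A.game I (e.upd x c)))
  | .call x A, e => gameCAnd Set.univ fun c => A.game I (e.upd x c)
  | .cex x A, e => gNeg (gameCAnd Set.univ fun c => gNeg (A.game I (e.upd x c)))

/-- A sequent `E₁,…,Eₙ ∘̸– F` with a list antecedent (standard-tree form). -/
structure Sequent where
  ante : List Fml
  succ : Fml

/-- The standard (right-nested) tree with the given yield. -/
def stdGTree (A : ConstGame) : List ConstGame → GTree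
  | [] => .leaf A
  | B :: rest => .node (.leaf A) (stdGTree B rest)

/-- The game represented by a sequent: the dfb-reduction of the succedent to the
standard tree of the antecedent (the succedent itself if the antecedent is empty). -/
def Sequent.game (I : Interp) (S : Sequent) : Game := fun e =>
  match S.ante with
  | [] => S.succ.game I e
  | E :: rest => dfb (stdGTree (E.game I e) (rest.map fun G => G.game I e)) (S.succ.game I e)

/-! ## Uniform-constructive soundness of rules -/

/-- A rule (a relation between lists of premise sequents and conclusion sequents) is
uniform-constructively sound iff there is an (effective) procedure turning machines
winning the premises under an interpretation into a machine winning the conclusion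
under the same interpretation. -/
def UCSound (R : List Sequent → Sequent → Prop) : Prop :=
  ∃ F : List Sequent → Sequent → List BMEPM → BMEPM,
    ∀ (Xs : List Sequent) (X0 : Sequent) (Ms : List BMEPM),
      R Xs X0 → Ms.length = Xs.length →
      ∀ (I : Interp) (e : Valuation),
        (∀ (i : ℕ) (hx : i < Xs.length) (hm : i < Ms.length),
            (Ms[i]'hm).WinsOn ((Xs[i]'hx).game I) e) →
        (F Xs X0 Ms).WinsOn (X0.game I) e

/-! ## Trees of formulas and general sequents -/

/-- A (nonempty) tree of formulas. -/
inductive FTree where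
  | leaf : Fml → FTree
  | node : FTree → FTree → FTree

/-- The yield of a tree of formulas. -/
def FTree.yield : FTree → List Fml
  | .leaf F => [F]
  | .node l r => l.yield ++ r.yield

def FTree.toGTree (I : Interp) (e : Valuation) : FTree → GTree
  | .leaf F => .leaf (F.game I e)
  | .node l r => .node (l.toGTree I e) (r.toGTree I e)

/-- A sequent whose antecedent is an arbitrary (possibly empty) tree of formulas. -/
structure TSeq where
  ante : Option FTree
  succ : Fml

def TSeq.game (I : Interp) (S : TSeq) : Game := fun e =>
  match S.ante with
  | none => S.succ.game I e
  | some T => dfb (T.toGTree I e) (S.succ.game I e)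

def stdFTree1 (F : Fml) : List Fml → FTree
  | [] => .leaf F
  | G :: rest => .node (.leaf F) (stdFTree1 G rest)

/-- The standard tree of formulas with a given yield. -/
def stdFTree : List Fml → Option FTree
  | [] => none
  | F :: rest => some (stdFTree1 F rest)

/-- Uniform-constructive soundness, for rules on tree-antecedent sequents. -/
def UCSoundT (R : List TSeq → TSeq → Prop) : Prop :=
  ∃ F : List TSeq → TSeq → List BMEPM → BMEPM,
    ∀ (Xs : List TSeq) (X0 : TSeq) (Ms : List BMEPM),
      R Xs X0 → Ms.length = Xs.length →
      ∀ (I : Interp) (e : Valuation),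
        (∀ (i : ℕ) (hx : i < Xs.length) (hm : i < Ms.length),
            (Ms[i]'hm).WinsOn ((Xs[i]'hx).game I) e) →
        (F Xs X0 Ms).WinsOn (X0.game I) e

/-! ## Substitution, occurrences -/

def Term.subst : Term → ℕ → Term → Term
  | .var y, x, t => if y = x then t else .var y
  | .const d, _, _ => .const d
  | .func f ts, x, t => .func f fun i => (ts i).subst x t

/-- Replace all free occurrences of variable `x` by term `t`. -/
def Fml.subst (x : ℕ) (t : Term) : Fml → Fml
  | .tt => .tt
  | .ff => .ff
  | .atom b p a => .atom b p fun i => (a i).subst x t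
  | .and A B => .and (A.subst x t) (B.subst x t)
  | .or A B => .or (A.subst x t) (B.subst x t)
  | .cand A B => .cand (A.subst x t) (B.subst x t)
  | .cor A B => .cor (A.subst x t) (B.subst x t)
  | .all y A => .all y (if y = x then A else A.subst x t)
  | .ex y A => .ex y (if y = x then A else A.subst x t)
  | .call y A => .call y (if y = x then A else A.subst x t)
  | .cex y A => .cex y (if y = x then A else A.subst x t)

def Term.hasVar (y : ℕ) : Term → Prop
  | .var x => x = y
  | .const _ => False
  | .func _ ts => ∃ i, (ts i).hasVar y

/-- `y` occurs (free, bound or as a binder) in the formula. -/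
def Fml.mentionsVar (y : ℕ) : Fml → Prop
  | .tt => False
  | .ff => False
  | .atom _ _ a => ∃ i, (a i).hasVar y
  | .and A B => A.mentionsVar y ∨ B.mentionsVar y
  | .or A B => A.mentionsVar y ∨ B.mentionsVar y
  | .cand A B => A.mentionsVar y ∨ B.mentionsVar y
  | .cor A B => A.mentionsVar y ∨ B.mentionsVar y
  | .all x A => x = y ∨ A.mentionsVar y
  | .ex x A => x = y ∨ A.mentionsVar y
  | .call x A => x = y ∨ A.mentionsVar y
  | .cex x A => x = y ∨ A.mentionsVar y

/-- `y` occurs as a bound variable (i.e. is used as a binder) in the formula. -/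
def Fml.bindsVar (y : ℕ) : Fml → Prop
  | .tt => False
  | .ff => False
  | .atom _ _ _ => False
  | .and A B => A.bindsVar y ∨ B.bindsVar y
  | .or A B => A.bindsVar y ∨ B.bindsVar y
  | .cand A B => A.bindsVar y ∨ B.bindsVar y
  | .cor A B => A.bindsVar y ∨ B.bindsVar y
  | .all x A => x = y ∨ A.bindsVar y
  | .ex x A => x = y ∨ A.bindsVar y
  | .call x A => x = y ∨ A.bindsVar y
  | .cex x A => x = y ∨ A.bindsVar y

/-- `y` occurs free in the formula. -/
def Fml.freeVar (y : ℕ) : Fml → Prop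
  | .tt => False
  | .ff => False
  | .atom _ _ a => ∃ i, (a i).hasVar y
  | .and A B => A.freeVar y ∨ B.freeVar y
  | .or A B => A.freeVar y ∨ B.freeVar y
  | .cand A B => A.freeVar y ∨ B.freeVar y
  | .cor A B => A.freeVar y ∨ B.freeVar y
  | .all x A => x ≠ y ∧ A.freeVar y
  | .ex x A => x ≠ y ∧ A.freeVar y
  | .call x A => x ≠ y ∧ A.freeVar y
  | .cex x A => x ≠ y ∧ A.freeVar y

def Sequent.mentionsVar (S : Sequent) (y : ℕ) : Prop :=
  (∃ E ∈ S.ante, E.mentionsVar y) ∨ S.succ.mentionsVar y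

def Sequent.bindsVar (S : Sequent) (y : ℕ) : Prop :=
  (∃ E ∈ S.ante, E.bindsVar y) ∨ S.succ.bindsVar y

/-! ## Elementarization, classical semantics, stability -/

/-- A formula is elementary iff it contains no choice operators. -/
def Fml.elementary : Fml → Prop
  | .tt => True
  | .ff => True
  | .atom _ _ _ => True
  | .and A B => A.elementary ∧ B.elementary
  | .or A B => A.elementary ∧ B.elementary
  | .cand _ _ => False
  | .cor _ _ => False
  | .all _ A => A.elementary
  | .ex _ A => A.elementary
  | .call _ _ => False
  | .cex _ _ => False

/-- The elementarization of a formula: replace all `⊔`/`⊔x`-subformulas by `⊥` and all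
`⊓`/`⊓x`-subformulas by `⊤`. -/
def Fml.elz : Fml → Fml
  | .tt => .tt
  | .ff => .ff
  | .atom b p a => .atom b p a
  | .and A B => .and A.elz B.elz
  | .or A B => .or A.elz B.elz
  | .cand _ _ => .tt
  | .cor _ _ => .ff
  | .all x A => .all x A.elz
  | .ex x A => .ex x A.elz
  | .call _ _ => .tt
  | .cex _ _ => .ff

/-- Standard (DeMorgan) negation of a formula. -/
def Fml.negF : Fml → Fml
  | .tt => .ff
  | .ff => .tt
  | .atom b p a => .atom (!b) p a
  | .and A B => .or A.negF B.negF
  | .or A B => .and A.negF B.negF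
  | .cand A B => .cor A.negF B.negF
  | .cor A B => .cand A.negF B.negF
  | .all x A => .ex x A.negF
  | .ex x A => .all x A.negF
  | .call x A => .cex x A.negF
  | .cex x A => .call x A.negF

/-- Implication as the standard abbreviation. -/
def Fml.imp (A B : Fml) : Fml := .or A.negF B

def bigAnd : Fml → List Fml → Fml
  | A, [] => A
  | A, B :: rest => .and A (bigAnd B rest)

/-- The elementarization of a sequent `G₁,…,Gₙ ∘̸– F`:
the elementary formula `‖G₁‖∧…∧‖Gₙ‖ → ‖F‖`. -/
def Sequent.elz (S : Sequent) : Fml :=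
  match S.ante with
  | [] => S.succ.elz
  | E :: rest => (bigAnd E.elz (rest.map Fml.elz)).imp S.succ.elz

/-- A classical first-order structure (with `=` interpreted as identity). -/
structure Struc where
  D : Type
  ne : Nonempty D
  cn : ℕ → D
  fn : (f : FuncSym) → (Fin f.ar → D) → D
  pr : (p : PredSym) → (Fin p.arity → D) → Prop
  eq_iden : ∀ a b : D, pr .eq (duo a b) ↔ a = b

def Term.evalS (St : Struc) (e : ℕ → St.D) : Term → St.D
  | .var x => e x
  | .const c => St.cn c
  | .func f ts => St.fn f fun i => (ts i).evalS St e

/-- Classical (Tarskian) truth of a formula in a structure under an assignment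
(choice operators are read classically; they do not occur in elementary formulas). -/
def Fml.trueIn (St : Struc) : Fml → (ℕ → St.D) → Prop
  | .tt, _ => True
  | .ff, _ => False
  | .atom b p a, e => ((St.pr p fun i => (a i).evalS St e) ↔ b = false)
  | .and A B, e => A.trueIn St e ∧ B.trueIn St e
  | .or A B, e => A.trueIn St e ∨ B.trueIn St e
  | .cand A B, e => A.trueIn St e ∧ B.trueIn St e
  | .cor A B, e => A.trueIn St e ∨ B.trueIn St e
  | .all x A, e => ∀ d, A.trueIn St fun y => if y = x then d else e y
  | .ex x A, e => ∃ d, A.trueIn St fun y => if y = x then d else e y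
  | .call x A, e => ∀ d, A.trueIn St fun y => if y = x then d else e y
  | .cex x A, e => ∃ d, A.trueIn St fun y => if y = x then d else e y

/-- Classical validity (= provability in classical predicate calculus with `=`, by
Gödel's completeness theorem). -/
def FValid (F : Fml) : Prop := ∀ (St : Struc) (e : ℕ → St.D), F.trueIn St e

/-- A sequent is stable iff its elementarization is classically valid. -/
def Sequent.stable (S : Sequent) : Prop := FValid S.elz

/-! ## The system CL12 -/

/-- Surface contexts: a formula with a hole not in the scope of any choice operator. -/
inductive FCtx where
  | hole
  | andL : FCtx → Fml → FCtx
  | andR : Fml → FCtx → FCtx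
  | orL : FCtx → Fml → FCtx
  | orR : Fml → FCtx → FCtx
  | allC : ℕ → FCtx → FCtx
  | exC : ℕ → FCtx → FCtx

def FCtx.fill : FCtx → Fml → Fml
  | .hole, H => H
  | .andL C B, H => .and (C.fill H) B
  | .andR A C, H => .and A (C.fill H)
  | .orL C B, H => .or (C.fill H) B
  | .orR A C, H => .or A (C.fill H)
  | .allC x C, H => .all x (C.fill H)
  | .exC x C, H => .ex x (C.fill H)

/-- `t` is a constant or a variable with no bound occurrences in the premise. -/
def TermOk (t : Term) (prem : Sequent) : Prop :=
  (∃ c, t = Term.const c) ∨ (∃ y, t = Term.var y ∧ ¬ prem.bindsVar y)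

/-- The single-premise rules of CL12: `⊓`-Choose, `⊔`-Choose, `⊓x`-Choose,
`⊔x`-Choose and Replicate.  `NonWaitStep Y X` means `X` follows from premise `Y`. -/
inductive NonWaitStep : Sequent → Sequent → Prop
  | candChoose (G K : List Fml) (C : FCtx) (H0 H1 : Fml) (i : Bool) (F : Fml) :
      NonWaitStep ⟨G ++ (C.fill (if i then H1 else H0)) :: K, F⟩
                  ⟨G ++ (C.fill (.cand H0 H1)) :: K, F⟩
  | corChoose (G : List Fml) (C : FCtx) (H0 H1 : Fml) (i : Bool) :
      NonWaitStep ⟨G, C.fill (if i then H1 else H0)⟩ ⟨G, C.fill (.cor H0 H1)⟩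
  | callChoose (G K : List Fml) (C : FCtx) (x : ℕ) (H : Fml) (t : Term) (F : Fml) :
      TermOk t ⟨G ++ (C.fill (H.subst x t)) :: K, F⟩ →
      NonWaitStep ⟨G ++ (C.fill (H.subst x t)) :: K, F⟩
                  ⟨G ++ (C.fill (.call x H)) :: K, F⟩
  | cexChoose (G : List Fml) (C : FCtx) (x : ℕ) (H : Fml) (t : Term) :
      TermOk t ⟨G, C.fill (H.subst x t)⟩ →
      NonWaitStep ⟨G, C.fill (H.subst x t)⟩ ⟨G, C.fill (.cex x H)⟩
  | replicate (G K : List Fml) (E F : Fml) :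
      NonWaitStep ⟨G ++ E :: K ++ [E], F⟩ ⟨G ++ E :: K, F⟩

/-- `Y` follows from the set `P` of premises by Wait. -/
def WaitStep (P : Set Sequent) (Y : Sequent) : Prop :=
  Y.stable ∧
  (∀ (C : FCtx) (H0 H1 : Fml), Y.succ = C.fill (.cand H0 H1) →
      (⟨Y.ante, C.fill H0⟩ : Sequent) ∈ P ∧ (⟨Y.ante, C.fill H1⟩ : Sequent) ∈ P) ∧
  (∀ (G K : List Fml) (C : FCtx) (H0 H1 : Fml),
      Y.ante = G ++ (C.fill (.cor H0 H1)) :: K →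
      (⟨G ++ (C.fill H0) :: K, Y.succ⟩ : Sequent) ∈ P ∧
      (⟨G ++ (C.fill H1) :: K, Y.succ⟩ : Sequent) ∈ P) ∧
  (∀ (C : FCtx) (x : ℕ) (H : Fml), Y.succ = C.fill (.call x H) →
      ∃ y, ¬ Y.mentionsVar y ∧
        (⟨Y.ante, C.fill (H.subst x (.var y))⟩ : Sequent) ∈ P) ∧
  (∀ (G K : List Fml) (C : FCtx) (x : ℕ) (H : Fml),
      Y.ante = G ++ (C.fill (.cex x H)) :: K →
      ∃ y, ¬ Y.mentionsVar y ∧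
        (⟨G ++ (C.fill (H.subst x (.var y))) :: K, Y.succ⟩ : Sequent) ∈ P)

/-- `X` follows from premises in `P` by one of the rules of CL12. -/
def CL12Step (P : Set Sequent) (X : Sequent) : Prop :=
  (∃ Y ∈ P, NonWaitStep Y X) ∨ WaitStep P X

/-- `L` is a CL12-proof of `X`: a nonempty sequence of sequents ending in `X` in which
every sequent follows from some earlier ones by a rule of CL12. -/
def IsCL12Proof (L : List Sequent) (X : Sequent) : Prop :=
  L ≠ [] ∧ L.getLast? = some X ∧
  ∀ (i : ℕ) (h : i < L.length), CL12Step {Y | Y ∈ L.take i} (L[i]'h)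

def CL12Proves (X : Sequent) : Prop := ∃ L, IsCL12Proof L X

/-- `Y` is a `⊥`-development of `X`. -/
inductive BotDev : Sequent → Sequent → Prop
  | c1 (E : List Fml) (C : FCtx) (H0 H1 : Fml) (i : Bool) :
      BotDev ⟨E, C.fill (.cand H0 H1)⟩ ⟨E, C.fill (if i then H1 else H0)⟩
  | c2 (E K : List Fml) (C : FCtx) (H0 H1 : Fml) (i : Bool) (F : Fml) :
      BotDev ⟨E ++ (C.fill (.cor H0 H1)) :: K, F⟩
             ⟨E ++ (C.fill (if i then H1 else H0)) :: K, F⟩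
  | c3 (E : List Fml) (C : FCtx) (x : ℕ) (H : Fml) (y : ℕ) :
      ¬ (Sequent.mk E (C.fill (.call x H))).mentionsVar y →
      BotDev ⟨E, C.fill (.call x H)⟩ ⟨E, C.fill (H.subst x (.var y))⟩
  | c4 (E K : List Fml) (C : FCtx) (x : ℕ) (H : Fml) (y : ℕ) (F : Fml) :
      ¬ (Sequent.mk (E ++ (C.fill (.cex x H)) :: K) F).mentionsVar y →
      BotDev ⟨E ++ (C.fill (.cex x H)) :: K, F⟩
             ⟨E ++ (C.fill (H.subst x (.var y))) :: K, F⟩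

/-- `Y` is a `⊤`-development of `X`: `X` follows from `Y` by a rule other than Wait. -/
def TopDev (X Y : Sequent) : Prop := NonWaitStep Y X

/-! ## Arithmetic: CLA1 and CLA2 -/

def fSucc : FuncSym := ⟨1, 0⟩
def fPlus : FuncSym := ⟨2, 0⟩
def fTimes : FuncSym := ⟨2, 1⟩

def tv (x : ℕ) : Term := .var x
def t0 : Term := .const 0
def tS (t : Term) : Term := .func fSucc fun _ => t
def tPlus (a b : Term) : Term := .func fPlus (duo a b)
def tTimes (a b : Term) : Term := .func fTimes (duo a b)
def fEq (a b : Term) : Fml := .atom false .eq (duo a b)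
def fNeq (a b : Term) : Fml := .atom true .eq (duo a b)

/-- The language of CLA1: only the constant `0`, the function symbols `'`, `+`, `×`
and the predicate symbol `=`. -/
def Term.inLangA : Term → Prop
  | .var _ => True
  | .const c => c = 0
  | .func f ts => (f = fSucc ∨ f = fPlus ∨ f = fTimes) ∧ ∀ i, (ts i).inLangA

def Fml.inLangA : Fml → Prop
  | .tt => True
  | .ff => True
  | .atom _ p a => p = .eq ∧ ∀ i, (a i).inLangA
  | .and A B => A.inLangA ∧ B.inLangA
  | .or A B => A.inLangA ∧ B.inLangA
  | .cand A B => A.inLangA ∧ B.inLangA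
  | .cor A B => A.inLangA ∧ B.inLangA
  | .all _ A => A.inLangA
  | .ex _ A => A.inLangA
  | .call _ A => A.inLangA
  | .cex _ A => A.inLangA

def Sequent.inLangA (S : Sequent) : Prop := (∀ E ∈ S.ante, E.inLangA) ∧ S.succ.inLangA

def allClose : List ℕ → Fml → Fml
  | [], F => F
  | v :: vs, F => .all v (allClose vs F)

def callClose : List ℕ → Fml → Fml
  | [], F => F
  | v :: vs, F => .call v (callClose vs F)

/-- The induction formula `F(0) ∧ ∀x(F(x)→F(x')) → ∀x F(x)`. -/
def indFml (F : Fml) (x : ℕ) : Fml :=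
  (Fml.and (F.subst x t0) (.all x (F.imp (F.subst x (tS (tv x)))))).imp (.all x F)

/-- The axioms of PA: the `∀`-closures of the six defining axioms of `'`, `+`, `×`
together with the induction scheme for elementary formulas (of the language `lang`). -/
inductive IsPAAx (lang : Fml → Prop) : Fml → Prop
  | a1 : IsPAAx lang (.all 0 (fNeq t0 (tS (tv 0))))
  | a2 : IsPAAx lang (.all 0 (.all 1 ((fEq (tS (tv 0)) (tS (tv 1))).imp (fEq (tv 0) (tv 1)))))
  | a3 : IsPAAx lang (.all 0 (fEq (tPlus (tv 0) t0) (tv 0)))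
  | a4 : IsPAAx lang (.all 0 (.all 1
      (fEq (tPlus (tv 0) (tS (tv 1))) (tS (tPlus (tv 0) (tv 1))))))
  | a5 : IsPAAx lang (.all 0 (fEq (tTimes (tv 0) t0) t0))
  | a6 : IsPAAx lang (.all 0 (.all 1
      (fEq (tTimes (tv 0) (tS (tv 1))) (tPlus (tTimes (tv 0) (tv 1)) (tv 0)))))
  | ind (vs : List ℕ) (F : Fml) (x : ℕ) :
      F.elementary → lang F → (∀ y, (indFml F x).freeVar y → y ∈ vs) →
      IsPAAx lang (allClose vs (indFml F x))

/-- Axiom 7 of CLA1: `⊓x⊔y(y = x')`. -/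
def axSeven : Fml := .call 0 (.cex 1 (fEq (tv 1) (tS (tv 0))))

/-- The axioms of a CL-based arithmetic: the PA axioms plus `⊓x⊔y(y = x')`. -/
def IsCLAAx (lang : Fml → Prop) (A : Fml) : Prop := IsPAAx lang A ∨ A = axSeven

def CLA1Ax : Fml → Prop := IsCLAAx Fml.inLangA
def CLA2Ax : Fml → Prop := IsCLAAx fun _ => True

/-- (Extended) natural deductions of the CL-based arithmetics: a deduction of `F` from
hypotheses `Γ`, where `lc` is Logical Consequence (carrying a CL12-proof of the
corresponding sequent, so that these deductions are *extended* proofs) and `ci` is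
Constructive Induction (with a fresh variable `x`). -/
inductive CLADed (ax : Fml → Prop) : List Fml → Fml → Type
  | hyp (Γ : List Fml) (F : Fml) : F ∈ Γ → CLADed ax Γ F
  | axm (Γ : List Fml) (F : Fml) : ax F → CLADed ax Γ F
  | lc (Γ Gs : List Fml) (F : Fml) (L : List Sequent) :
      IsCL12Proof L ⟨Gs, F⟩ → (∀ G ∈ Gs, CLADed ax Γ G) → CLADed ax Γ F
  | ci (Γ : List Fml) (F : Fml) (x : ℕ) :
      (∀ E ∈ Γ, ¬ E.mentionsVar x) →
      CLADed ax Γ (F.subst x t0) →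
      CLADed ax (F :: Γ) (F.subst x (tS (tv x))) →
      CLADed ax Γ (.call x F)

/-- Provability of the sequent `Γ ∘̸– F` in a CL-based arithmetic. -/
def CLAProves (ax : Fml → Prop) (Γ : List Fml) (F : Fml) : Prop := Nonempty (CLADed ax Γ F)

/-- The standard interpretation of the function symbols. -/
def stdFn (f : FuncSym) (v : Fin f.ar → ℕ) : ℕ :=
  if h : f = fSucc then v ⟨0, by rw [h]; exact Nat.zero_lt_one⟩ + 1
  else if h : f = fPlus then
    v ⟨0, by rw [h]; exact Nat.zero_lt_two⟩ + v ⟨1, by rw [h]; exact Nat.one_lt_two⟩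
  else if h : f = fTimes then
    v ⟨0, by rw [h]; exact Nat.zero_lt_two⟩ * v ⟨1, by rw [h]; exact Nat.one_lt_two⟩
  else 0

def stdPr (p : PredSym) (v : Fin p.arity → ℕ) : Prop :=
  match p, v with
  | .eq, v => v ⟨0, Nat.zero_lt_two⟩ = v ⟨1, Nat.one_lt_two⟩
  | .pred _ _, _ => False

/-- The standard interpretation `†`. -/
def stdInterp : Interp where
  fn := stdFn
  pr := stdPr
  eq_equiv := ⟨fun _ => rfl, fun h => h.symm, fun h1 h2 => h1.trans h2⟩
  fn_congr := fun f u v h => by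
    have huv : u = v := funext fun i => h i
    show stdFn f u = stdFn f v
    rw [huv]
  pr_congr := fun p u v h => by
    have huv : u = v := funext fun i => h i
    rw [huv]

/-- An interpretation is standard iff it interprets `=` as identity, `'` as successor,
`+` as sum and `×` as product. -/
def Interp.IsStandard (I : Interp) : Prop :=
  (∀ v : Fin 2 → ℕ, I.pr .eq v ↔ v 0 = v 1) ∧
  (∀ v : Fin 1 → ℕ, I.fn fSucc v = v 0 + 1) ∧
  (∀ v : Fin 2 → ℕ, I.fn fPlus v = v 0 + v 1) ∧
  (∀ v : Fin 2 → ℕ, I.fn fTimes v = v 0 * v 1)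

/-- Provability in classical Peano arithmetic (by Gödel's completeness theorem:
semantic consequence of the PA axioms). -/
def PAProvable (F : Fml) : Prop :=
  ∀ (St : Struc) (e : ℕ → St.D),
    (∀ A, IsPAAx Fml.inLangA A → ∀ e' : ℕ → St.D, A.trueIn St e') → F.trueIn St e

/-! ## Primitive-recursive constructions -/

/-- Absolute primitive-recursive definitions (forms (I), (II), (III)). -/
inductive PRDefAbs : FuncSym → Fml → Prop
  | defI (f : FuncSym) (h : f.ar = 1) :
      PRDefAbs f (.all 0 (fEq (.func f fun _ => tv 0) (tS (tv 0))))
  | defII (f : FuncSym) :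
      PRDefAbs f (allClose (List.range f.ar) (fEq (.func f fun j => tv j.val) t0))
  | defIII (f : FuncSym) (i : Fin f.ar) :
      PRDefAbs f (allClose (List.range f.ar) (fEq (.func f fun j => tv j.val) (tv i.val)))

/-- Relative primitive-recursive definitions (forms (IV) composition and
(V) primitive recursion), together with the list of function symbols in terms of
which the new symbol is defined. -/
inductive PRDefRel : FuncSym → List FuncSym → Fml → Prop
  | defIV (f g : FuncSym) (hs : Fin g.ar → FuncSym)
      (hh : ∀ j, (hs j).ar = f.ar) :
      PRDefRel f (g :: List.ofFn hs)
        (allClose (List.range f.ar)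
          (fEq (.func f fun i => tv i.val)
               (.func g fun j => .func (hs j) fun i => tv i.val)))
  | defV (f g h : FuncSym) (n : ℕ) (hn : f.ar = n) (h1 : 1 ≤ n)
      (hg : g.ar = n - 1) (hh : h.ar = n + 1) :
      PRDefRel f [g, h]
        (.and (allClose (List.range' 1 (n - 1))
                 (fEq (.func f fun i => if i.val = 0 then t0 else tv i.val)
                      (.func g fun j => tv (j.val + 1))))
              (allClose (List.range n)
                 (fEq (.func f fun i => if i.val = 0 then tS (tv 0) else tv i.val)
                      (.func h fun j =>
                        if j.val = 0 then tv 0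
                        else if j.val = 1 then .func f fun i => tv i.val
                        else tv (j.val - 1)))))

/-- `Es` is a primitive-recursive construction of `f`. -/
def IsPRConstruction (f : FuncSym) (Es : List Fml) : Prop :=
  ∃ gs : List FuncSym, gs.length = Es.length ∧ gs.Nodup ∧ gs.getLast? = some f ∧
    ∀ (i : ℕ) (hi : i < Es.length) (hg : i < gs.length),
      PRDefAbs (gs[i]'hg) (Es[i]'hi) ∨
      ∃ deps : List FuncSym, PRDefRel (gs[i]'hg) deps (Es[i]'hi) ∧
        ∀ d ∈ deps, ∃ (j : ℕ) (hj : j < gs.length), j < i ∧ gs[j]'hj = d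

/-- The goal formula `⊓x₁…⊓xₙ⊔y (f(x₁,…,xₙ) = y)`. -/
def prGoal (f : FuncSym) : Fml :=
  callClose (List.range f.ar)
    (.cex f.ar (fEq (.func f fun i => tv i.val) (tv f.ar)))

theorem duo_comp {α β : Sort*} (g : α → β) (a b : α) :
    (fun i => g (duo a b i)) = duo (g a) (g b) := by
  funext i
  by_cases h : (i : ℕ) = 0 <;> simp [duo, h]

theorem exists_duo {α : Sort*} {P : α → Prop} {a b : α} :
    (∃ i : Fin 2, P (duo a b i)) ↔ P a ∨ P b := by
  simp [Fin.exists_fin_two, duo]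

@[simp] theorem Term.var_eq_tv (n : ℕ) : Term.var n = tv n := rfl

@[simp] theorem subst_tv (y x : ℕ) (t : Term) :
    (tv y).subst x t = if y = x then t else tv y := rfl

@[simp] theorem subst_t0 (x : ℕ) (t : Term) : t0.subst x t = t0 := rfl

@[simp] theorem subst_tS (a : Term) (x : ℕ) (t : Term) :
    (tS a).subst x t = tS (a.subst x t) := rfl

@[simp] theorem subst_tPlus (a b : Term) (x : ℕ) (t : Term) :
    (tPlus a b).subst x t = tPlus (a.subst x t) (b.subst x t) :=
  congrArg (Term.func fPlus) (duo_comp (Term.subst · x t) a b)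

@[simp] theorem subst_tTimes (a b : Term) (x : ℕ) (t : Term) :
    (tTimes a b).subst x t = tTimes (a.subst x t) (b.subst x t) :=
  congrArg (Term.func fTimes) (duo_comp (Term.subst · x t) a b)

@[simp] theorem subst_fEq (a b : Term) (x : ℕ) (t : Term) :
    (fEq a b).subst x t = fEq (a.subst x t) (b.subst x t) :=
  congrArg (Fml.atom false .eq) (duo_comp (Term.subst · x t) a b)

@[simp] theorem subst_call (y x : ℕ) (t : Term) (A : Fml) :
    (Fml.call y A).subst x t = .call y (if y = x then A else A.subst x t) := rfl

@[simp] theorem subst_cex (y x : ℕ) (t : Term) (A : Fml) :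
    (Fml.cex y A).subst x t = .cex y (if y = x then A else A.subst x t) := rfl

@[simp] theorem hasVar_tv (n y : ℕ) : (tv n).hasVar y ↔ n = y := Iff.rfl

@[simp] theorem hasVar_t0 (y : ℕ) : ¬ t0.hasVar y := id

@[simp] theorem hasVar_tS (a : Term) (y : ℕ) : (tS a).hasVar y ↔ a.hasVar y :=
  ⟨fun ⟨_, h⟩ => h, fun h => ⟨⟨0, Nat.one_pos⟩, h⟩⟩

@[simp] theorem hasVar_tPlus (a b : Term) (y : ℕ) :
    (tPlus a b).hasVar y ↔ a.hasVar y ∨ b.hasVar y := exists_duo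

@[simp] theorem hasVar_tTimes (a b : Term) (y : ℕ) :
    (tTimes a b).hasVar y ↔ a.hasVar y ∨ b.hasVar y := exists_duo

@[simp] theorem mentionsVar_fEq (a b : Term) (y : ℕ) :
    (fEq a b).mentionsVar y ↔ a.hasVar y ∨ b.hasVar y := exists_duo

@[simp] theorem bindsVar_fEq (a b : Term) (y : ℕ) : ¬ (fEq a b).bindsVar y := id

@[simp] theorem elz_fEq (a b : Term) : (fEq a b).elz = fEq a b := rfl

theorem Fml.trueIn_negF (St : Struc) (F : Fml) (e : ℕ → St.D) :
    F.negF.trueIn St e ↔ ¬ F.trueIn St e := by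
  induction F generalizing e with
  | tt | ff => simp [Fml.negF, Fml.trueIn]
  | atom b p a => cases b <;> simp [Fml.negF, Fml.trueIn]
  | and A B ihA ihB | or A B ihA ihB | cand A B ihA ihB | cor A B ihA ihB =>
    simp only [Fml.negF, Fml.trueIn, ihA, ihB]; tauto
  | all x A ih | ex x A ih | call x A ih | cex x A ih =>
    simp only [Fml.negF, Fml.trueIn, ih, not_forall, not_exists]

theorem Fml.trueIn_imp (St : Struc) (A B : Fml) (e : ℕ → St.D) :
    (A.imp B).trueIn St e ↔ (A.trueIn St e → B.trueIn St e) := by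
  rw [Fml.imp, Fml.trueIn, trueIn_negF, imp_iff_not_or]

theorem trueIn_bigAnd (St : Struc) (A : Fml) (l : List Fml) (e : ℕ → St.D) :
    (bigAnd A l).trueIn St e ↔ ∀ B ∈ A :: l, B.trueIn St e := by
  induction l generalizing A with
  | nil => simp [bigAnd]
  | cons B l ih => simp only [bigAnd, Fml.trueIn, ih, List.forall_mem_cons]

theorem Sequent.stable_iff (S : Sequent) :
    S.stable ↔ ∀ (St : Struc) (e : ℕ → St.D),
      (∀ E ∈ S.ante, E.elz.trueIn St e) → S.succ.elz.trueIn St e := by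
  rcases S with ⟨_ | ⟨E, G⟩, F⟩
  · simp [Sequent.stable, FValid, Sequent.elz]
  · simp [Sequent.stable, FValid, Sequent.elz, Fml.trueIn_imp, trueIn_bigAnd]

theorem Sequent.stable_of_cex_mem {S : Sequent} {x : ℕ} {H : Fml} (h : .cex x H ∈ S.ante) :
    S.stable :=
  S.stable_iff.2 fun _ _ hS => (hS _ h).elim

theorem Sequent.stable_of_succ_call (G : List Fml) (x : ℕ) (H : Fml) :
    Sequent.stable ⟨G, .call x H⟩ :=
  (Sequent.stable_iff _).2 fun _ _ _ => trivial

@[simp] theorem evalS_tv (St : Struc) (e : ℕ → St.D) (n : ℕ) : (tv n).evalS St e = e n := rfl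

@[simp] theorem evalS_t0 (St : Struc) (e : ℕ → St.D) : t0.evalS St e = St.cn 0 := rfl

@[simp] theorem evalS_tS (St : Struc) (e : ℕ → St.D) (a : Term) :
    (tS a).evalS St e = St.fn fSucc fun _ => a.evalS St e := rfl

@[simp] theorem evalS_tPlus (St : Struc) (e : ℕ → St.D) (a b : Term) :
    (tPlus a b).evalS St e = St.fn fPlus (duo (a.evalS St e) (b.evalS St e)) :=
  congrArg (St.fn fPlus) (duo_comp (Term.evalS St e) a b)

@[simp] theorem evalS_tTimes (St : Struc) (e : ℕ → St.D) (a b : Term) :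
    (tTimes a b).evalS St e = St.fn fTimes (duo (a.evalS St e) (b.evalS St e)) :=
  congrArg (St.fn fTimes) (duo_comp (Term.evalS St e) a b)

@[simp] theorem trueIn_fEq (St : Struc) (e : ℕ → St.D) (a b : Term) :
    (fEq a b).trueIn St e ↔ a.evalS St e = b.evalS St e := by
  have h : (fun i : Fin PredSym.eq.arity => (duo a b i).evalS St e) =
      duo (a.evalS St e) (b.evalS St e) := duo_comp _ a b
  simp only [fEq, Fml.trueIn, h, St.eq_iden, iff_true]

section SurfaceOccurrences

/-- Neither `⊔` nor `⊔x` occurs in the formula outside the scope of a choice operator;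
`NoSurfaceSqcap` is the same for `⊓` and `⊓x`. -/
@[simp] def Fml.NoSurfaceSqcup : Fml → Prop
  | .tt => True
  | .ff => True
  | .atom _ _ _ => True
  | .and A B => A.NoSurfaceSqcup ∧ B.NoSurfaceSqcup
  | .or A B => A.NoSurfaceSqcup ∧ B.NoSurfaceSqcup
  | .cand _ _ => True
  | .cor _ _ => False
  | .all _ A => A.NoSurfaceSqcup
  | .ex _ A => A.NoSurfaceSqcup
  | .call _ _ => True
  | .cex _ _ => False

@[simp] def Fml.NoSurfaceSqcap : Fml → Prop
  | .tt => True
  | .ff => True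
  | .atom _ _ _ => True
  | .and A B => A.NoSurfaceSqcap ∧ B.NoSurfaceSqcap
  | .or A B => A.NoSurfaceSqcap ∧ B.NoSurfaceSqcap
  | .cand _ _ => False
  | .cor _ _ => True
  | .all _ A => A.NoSurfaceSqcap
  | .ex _ A => A.NoSurfaceSqcap
  | .call _ _ => False
  | .cex _ _ => True

@[simp] theorem noSurfaceSqcup_fEq (a b : Term) : (fEq a b).NoSurfaceSqcup := trivial

@[simp] theorem noSurfaceSqcap_fEq (a b : Term) : (fEq a b).NoSurfaceSqcap := trivial

theorem Fml.NoSurfaceSqcup.of_fill {C : FCtx} {H : Fml} (h : (C.fill H).NoSurfaceSqcup) :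
    H.NoSurfaceSqcup := by
  induction C with
  | hole => exact h
  | andL C B ih | orL C B ih => exact ih h.1
  | andR A C ih | orR A C ih => exact ih h.2
  | allC x C ih | exC x C ih => exact ih h

theorem Fml.NoSurfaceSqcap.of_fill {C : FCtx} {H : Fml} (h : (C.fill H).NoSurfaceSqcap) :
    H.NoSurfaceSqcap := by
  induction C with
  | hole => exact h
  | andL C B ih | orL C B ih => exact ih h.1
  | andR A C ih | orR A C ih => exact ih h.2
  | allC x C ih | exC x C ih => exact ih h

variable {F : Fml} {C : FCtx}

theorem Fml.NoSurfaceSqcup.ne_fill_cor (h : F.NoSurfaceSqcup) (H0 H1 : Fml) :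
    F ≠ C.fill (.cor H0 H1) := fun he => (he ▸ h).of_fill

theorem Fml.NoSurfaceSqcup.ne_fill_cex (h : F.NoSurfaceSqcup) (x : ℕ) (H : Fml) :
    F ≠ C.fill (.cex x H) := fun he => (he ▸ h).of_fill

theorem Fml.NoSurfaceSqcap.ne_fill_cand (h : F.NoSurfaceSqcap) (H0 H1 : Fml) :
    F ≠ C.fill (.cand H0 H1) := fun he => (he ▸ h).of_fill

theorem Fml.NoSurfaceSqcap.ne_fill_call (h : F.NoSurfaceSqcap) (x : ℕ) (H : Fml) :
    F ≠ C.fill (.call x H) := fun he => (he ▸ h).of_fill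

theorem ne_append_fill_cor {G : List Fml} (hG : ∀ E ∈ G, E.NoSurfaceSqcup)
    (G' K : List Fml) (C : FCtx) (H0 H1 : Fml) : G ≠ G' ++ C.fill (.cor H0 H1) :: K := by
  rintro rfl
  exact (hG (C.fill (.cor H0 H1)) (by simp)).ne_fill_cor H0 H1 rfl

theorem ne_append_fill_cex {G : List Fml} (hG : ∀ E ∈ G, E.NoSurfaceSqcup)
    (G' K : List Fml) (C : FCtx) (x : ℕ) (H : Fml) : G ≠ G' ++ C.fill (.cex x H) :: K := by
  rintro rfl
  exact (hG (C.fill (.cex x H)) (by simp)).ne_fill_cex x H rfl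

theorem FCtx.fill_eq_call {G : Fml} {x : ℕ} {H : Fml} (h : C.fill G = .call x H) :
    C = .hole ∧ G = .call x H := by
  cases C <;> simp_all [FCtx.fill]

theorem FCtx.fill_eq_cex {G : Fml} {x : ℕ} {H : Fml} (h : C.fill G = .cex x H) :
    C = .hole ∧ G = .cex x H := by
  cases C <;> simp_all [FCtx.fill]

end SurfaceOccurrences

theorem termOk_t0 (S : Sequent) : TermOk t0 S := .inl ⟨0, rfl⟩

theorem termOk_tv {S : Sequent} {y : ℕ} (h : ¬ S.bindsVar y) : TermOk (tv y) S :=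
  .inr ⟨y, rfl, h⟩

theorem WaitStep.mono {P Q : Set Sequent} (hPQ : P ⊆ Q) {Y : Sequent} (h : WaitStep P Y) :
    WaitStep Q Y := by
  obtain ⟨hs, hcand, hcor, hcall, hcex⟩ := h
  refine ⟨hs, fun C H0 H1 he => ?_, fun G K C H0 H1 he => ?_, fun C x H he => ?_,
    fun G K C x H he => ?_⟩
  · exact (hcand C H0 H1 he).imp (@hPQ _) (@hPQ _)
  · exact (hcor G K C H0 H1 he).imp (@hPQ _) (@hPQ _)
  · exact (hcall C x H he).imp fun _ => And.imp_right (@hPQ _)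
  · exact (hcex G K C x H he).imp fun _ => And.imp_right (@hPQ _)

theorem IsCL12Proof.snoc {L : List Sequent} {Y X : Sequent} (hL : IsCL12Proof L Y)
    (hX : CL12Step {Z | Z ∈ L} X) : IsCL12Proof (L ++ [X]) X := by
  refine ⟨by simp, by simp, fun i hi => ?_⟩
  rcases (Nat.lt_succ_iff.1 (by simpa using hi)).lt_or_eq with hi' | rfl
  · rw [List.take_append_of_le_length hi'.le, List.getElem_append_left hi']
    exact hL.2.2 i hi'
  · simpa using hX

namespace CL12Proves

variable {X Y : Sequent}

theorem of_waitStep_empty (h : WaitStep ∅ X) : CL12Proves X :=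
  ⟨[X], by simp, rfl, fun i hi => by
    obtain rfl : i = 0 := by simpa using hi
    exact .inr (h.mono (Set.empty_subset _))⟩

theorem of_waitStep (hY : CL12Proves Y) (h : WaitStep {Y} X) : CL12Proves X :=
  let ⟨_, hL⟩ := hY
  ⟨_, hL.snoc (.inr (h.mono (Set.singleton_subset_iff.2 (List.mem_of_getLast? hL.2.1))))⟩

theorem of_nonWaitStep (hY : CL12Proves Y) (h : NonWaitStep Y X) : CL12Proves X :=
  let ⟨_, hL⟩ := hY
  ⟨_, hL.snoc (.inl ⟨Y, List.mem_of_getLast? hL.2.1, h⟩)⟩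

variable {G : List Fml} {F H H' : Fml} {x : ℕ}

theorem of_stable (hG : ∀ E ∈ G, E.NoSurfaceSqcup) (hF : F.NoSurfaceSqcap)
    (hs : Sequent.stable ⟨G, F⟩) : CL12Proves ⟨G, F⟩ :=
  of_waitStep_empty ⟨hs, fun _ _ _ he => (hF.ne_fill_cand _ _ he).elim,
    fun G' K C H0 H1 he => (ne_append_fill_cor hG G' K C H0 H1 he).elim,
    fun _ _ _ he => (hF.ne_fill_call _ _ he).elim,
    fun G' K C x H he => (ne_append_fill_cex hG G' K C x H he).elim⟩

theorem cexChoose (t : Term) (hH : H.subst x t = H') (ht : TermOk t ⟨G, H'⟩)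
    (h : CL12Proves ⟨G, H'⟩) : CL12Proves ⟨G, .cex x H⟩ := by
  subst hH
  exact h.of_nonWaitStep (.cexChoose G .hole x H t ht)

theorem callChoose (G K : List Fml) (t : Term) (hH : H.subst x t = H')
    (ht : TermOk t ⟨G ++ H' :: K, F⟩) (h : CL12Proves ⟨G ++ H' :: K, F⟩) :
    CL12Proves ⟨G ++ .call x H :: K, F⟩ := by
  subst hH
  exact h.of_nonWaitStep (.callChoose G K .hole x H t F ht)

theorem waitCall (y : ℕ) (hG : ∀ E ∈ G, E.NoSurfaceSqcup)
    (hy : ¬ Sequent.mentionsVar ⟨G, .call x H⟩ y) (hH : H.subst x (.var y) = H')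
    (h : CL12Proves ⟨G, H'⟩) : CL12Proves ⟨G, .call x H⟩ := by
  subst hH
  refine h.of_waitStep ⟨Sequent.stable_of_succ_call G x H, fun C H0 H1 he => ?_,
    fun G' K C H0 H1 he => (ne_append_fill_cor hG G' K C H0 H1 he).elim,
    fun C x' H'' he => ?_, fun G' K C x H he => (ne_append_fill_cex hG G' K C x H he).elim⟩
  · cases (FCtx.fill_eq_call he.symm).2
  · obtain ⟨rfl, he⟩ := FCtx.fill_eq_call he.symm
    cases he
    exact ⟨y, hy, rfl⟩

theorem waitCex (G K : List Fml) (y : ℕ) (hG : ∀ E ∈ G, E.NoSurfaceSqcup)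
    (hK : ∀ E ∈ K, E.NoSurfaceSqcup) (hF : F.NoSurfaceSqcap)
    (hy : ¬ Sequent.mentionsVar ⟨G ++ .cex x H :: K, F⟩ y) (hH : H.subst x (.var y) = H')
    (h : CL12Proves ⟨G ++ H' :: K, F⟩) : CL12Proves ⟨G ++ .cex x H :: K, F⟩ := by
  subst hH
  refine h.of_waitStep ⟨Sequent.stable_of_cex_mem (x := x) (H := H) (by simp),
    fun _ _ _ he => (hF.ne_fill_cand _ _ he).elim, fun G' K' C H0 H1 he => ?_,
    fun _ _ _ he => (hF.ne_fill_call _ _ he).elim, fun G' K' C x' H'' he => ?_⟩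
  · have hmem : C.fill (.cor H0 H1) ∈ G ++ .cex x H :: K := by
      rw [show G ++ _ = _ from he]; simp
    simp only [List.mem_append, List.mem_cons] at hmem
    rcases hmem with hmem | hmem | hmem
    · exact ((hG _ hmem).ne_fill_cor _ _ rfl).elim
    · cases (FCtx.fill_eq_cex hmem).2
    · exact ((hK _ hmem).ne_fill_cor _ _ rfl).elim
  · obtain ⟨rfl, hx, rfl⟩ := (List.append_cons_inj_of_notMem
      (fun hm => (hG _ hm).ne_fill_cex _ _ rfl) (fun hm => (hK _ hm).ne_fill_cex _ _ rfl)).1 he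
    obtain ⟨rfl, hx⟩ := FCtx.fill_eq_cex hx.symm
    cases hx
    exact ⟨y, hy, rfl⟩

end CL12Proves

section Arithmetic

attribute [local simp] Sequent.mentionsVar Fml.mentionsVar Sequent.bindsVar Fml.bindsVar Fml.elz
  Fml.trueIn

def axPlusZero : Fml := .all 0 (fEq (tPlus (tv 0) t0) (tv 0))

def axPlusSucc : Fml :=
  .all 0 (.all 1 (fEq (tPlus (tv 0) (tS (tv 1))) (tS (tPlus (tv 0) (tv 1)))))

def axTimesZero : Fml := .all 0 (fEq (tTimes (tv 0) t0) t0)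

def axTimesSucc : Fml :=
  .all 0 (.all 1 (fEq (tTimes (tv 0) (tS (tv 1))) (tPlus (tTimes (tv 0) (tv 1)) (tv 0))))

-- Addition uses the variables `3, 4, 5` so that its induction variable does not occur in
-- `mulFml`, the hypothesis of the outer induction.
def addFml : Fml := .call 4 (.cex 5 (fEq (tPlus (tv 4) (tv 3)) (tv 5)))

def mulFml : Fml := .call 1 (.cex 2 (fEq (tTimes (tv 1) (tv 0)) (tv 2)))

theorem cl12Proves_add_zero :
    CL12Proves ⟨[axPlusZero], .call 4 (.cex 5 (fEq (tPlus (tv 4) t0) (tv 5)))⟩ := by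
  have : CL12Proves ⟨[axPlusZero], fEq (tPlus (tv 6) t0) (tv 6)⟩ :=
    .of_stable (by simp [axPlusZero]) (by simp) <| (Sequent.stable_iff _).2 fun _ e h => by
      simpa using h _ List.mem_cons_self (e 6)
  have : CL12Proves ⟨[axPlusZero], .cex 5 (fEq (tPlus (tv 6) t0) (tv 5))⟩ :=
    this.cexChoose (tv 6) (by simp) (termOk_tv (by simp [axPlusZero]))
  exact this.waitCall 6 (by simp [axPlusZero]) (by simp [axPlusZero]) (by simp)

theorem cl12Proves_mul_zero :
    CL12Proves ⟨[axTimesZero], .call 1 (.cex 2 (fEq (tTimes (tv 1) t0) (tv 2)))⟩ := by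
  have : CL12Proves ⟨[axTimesZero], fEq (tTimes (tv 6) t0) t0⟩ :=
    .of_stable (by simp [axTimesZero]) (by simp) <| (Sequent.stable_iff _).2 fun _ e h => by
      simpa using h _ List.mem_cons_self (e 6)
  have : CL12Proves ⟨[axTimesZero], .cex 2 (fEq (tTimes (tv 6) t0) (tv 2))⟩ :=
    this.cexChoose t0 (by simp) (termOk_t0 _)
  exact this.waitCall 6 (by simp [axTimesZero]) (by simp [axTimesZero]) (by simp)

theorem cl12Proves_add_succ :
    CL12Proves ⟨[addFml, axPlusSucc, axSeven],
      .call 4 (.cex 5 (fEq (tPlus (tv 4) (tS (tv 3))) (tv 5)))⟩ := by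
  let sum := fEq (tPlus (tv 6) (tv 3)) (tv 7)
  let target := Fml.cex 5 (fEq (tPlus (tv 6) (tS (tv 3))) (tv 5))
  have : CL12Proves ⟨[sum, axPlusSucc, fEq (tv 8) (tS (tv 7))],
      fEq (tPlus (tv 6) (tS (tv 3))) (tv 8)⟩ :=
    .of_stable (by simp [sum, axPlusSucc]) (by simp) <| (Sequent.stable_iff _).2 fun St e h => by
      obtain ⟨hsum, hax, hsucc⟩ : _ ∧ _ ∧ _ := by simpa [sum, axPlusSucc] using h
      simpa [hax, hsum] using hsucc.symm
  have : CL12Proves ⟨[sum, axPlusSucc, fEq (tv 8) (tS (tv 7))], target⟩ :=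
    this.cexChoose (tv 8) (by simp) (termOk_tv (by simp [sum, axPlusSucc]))
  have : CL12Proves ⟨[sum, axPlusSucc, .cex 1 (fEq (tv 1) (tS (tv 7)))], target⟩ :=
    this.waitCex [sum, axPlusSucc] [] 8 (by simp [sum, axPlusSucc]) (by simp) (by simp [target])
      (by simp [sum, axPlusSucc, target]) (by simp)
  have : CL12Proves ⟨[sum, axPlusSucc, axSeven], target⟩ :=
    this.callChoose [sum, axPlusSucc] [] (tv 7) (by simp)
      (termOk_tv (by simp [sum, axPlusSucc, target]))
  have : CL12Proves
      ⟨[.cex 5 (fEq (tPlus (tv 6) (tv 3)) (tv 5)), axPlusSucc, axSeven], target⟩ :=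
    this.waitCex [] [axPlusSucc, axSeven] 7 (by simp) (by simp [axPlusSucc, axSeven])
      (by simp [target]) (by simp [axPlusSucc, axSeven, target]) (by simp [sum])
  have : CL12Proves ⟨[addFml, axPlusSucc, axSeven], target⟩ :=
    this.callChoose [] [axPlusSucc, axSeven] (tv 6) (by simp)
      (termOk_tv (by simp [axPlusSucc, axSeven, target]))
  exact this.waitCall 6 (by simp [addFml, axPlusSucc, axSeven])
    (by simp [addFml, axPlusSucc, axSeven]) (by simp [target])

theorem cl12Proves_mul_succ :
    CL12Proves ⟨[mulFml, .call 3 addFml, axTimesSucc],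
      .call 1 (.cex 2 (fEq (tTimes (tv 1) (tS (tv 0))) (tv 2)))⟩ := by
  let prod := fEq (tTimes (tv 6) (tv 0)) (tv 7)
  let target := Fml.cex 2 (fEq (tTimes (tv 6) (tS (tv 0))) (tv 2))
  have : CL12Proves ⟨[prod, fEq (tPlus (tv 7) (tv 6)) (tv 8), axTimesSucc],
      fEq (tTimes (tv 6) (tS (tv 0))) (tv 8)⟩ :=
    .of_stable (by simp [prod, axTimesSucc]) (by simp) <| (Sequent.stable_iff _).2 fun St e h => by
      obtain ⟨hprod, hsum, hax⟩ : _ ∧ _ ∧ _ := by simpa [prod, axTimesSucc] using h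
      simpa [hax, hprod] using hsum
  have : CL12Proves ⟨[prod, fEq (tPlus (tv 7) (tv 6)) (tv 8), axTimesSucc], target⟩ :=
    this.cexChoose (tv 8) (by simp) (termOk_tv (by simp [prod, axTimesSucc]))
  have : CL12Proves ⟨[prod, .cex 5 (fEq (tPlus (tv 7) (tv 6)) (tv 5)), axTimesSucc], target⟩ :=
    this.waitCex [prod] [axTimesSucc] 8 (by simp [prod]) (by simp [axTimesSucc]) (by simp [target])
      (by simp [prod, axTimesSucc, target]) (by simp)
  have : CL12Proves
      ⟨[prod, .call 4 (.cex 5 (fEq (tPlus (tv 4) (tv 6)) (tv 5))), axTimesSucc], target⟩ :=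
    this.callChoose [prod] [axTimesSucc] (tv 7) (by simp)
      (termOk_tv (by simp [prod, axTimesSucc, target]))
  have : CL12Proves ⟨[prod, .call 3 addFml, axTimesSucc], target⟩ :=
    this.callChoose [prod] [axTimesSucc] (tv 6) (by simp [addFml])
      (termOk_tv (by simp [prod, axTimesSucc, target]))
  have : CL12Proves
      ⟨[.cex 2 (fEq (tTimes (tv 6) (tv 0)) (tv 2)), .call 3 addFml, axTimesSucc], target⟩ :=
    this.waitCex [] [.call 3 addFml, axTimesSucc] 7 (by simp) (by simp [axTimesSucc])
      (by simp [target]) (by simp [addFml, axTimesSucc, target]) (by simp [prod])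
  have : CL12Proves ⟨[mulFml, .call 3 addFml, axTimesSucc], target⟩ :=
    this.callChoose [] [.call 3 addFml, axTimesSucc] (tv 6) (by simp)
      (termOk_tv (by simp [addFml, axTimesSucc, target]))
  exact this.waitCall 6 (by simp [mulFml, axTimesSucc]) (by simp [mulFml, addFml, axTimesSucc])
    (by simp [target])

end Arithmetic

section Deductions

variable {ax : Fml → Prop} {Γ : List Fml} {F : Fml}

theorem CLAProves.hyp (h : F ∈ Γ) : CLAProves ax Γ F := ⟨.hyp Γ F h⟩

theorem CLAProves.axm (h : ax F) : CLAProves ax Γ F := ⟨.axm Γ F h⟩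

theorem CLAProves.lc {Gs : List Fml} (hGs : CL12Proves ⟨Gs, F⟩)
    (h : ∀ G ∈ Gs, CLAProves ax Γ G) : CLAProves ax Γ F :=
  let ⟨L, hL⟩ := hGs
  ⟨.lc Γ Gs F L hL fun G hG => (h G hG).some⟩

theorem CLAProves.ci {x : ℕ} (hx : ∀ E ∈ Γ, ¬ E.mentionsVar x)
    (h0 : CLAProves ax Γ (F.subst x t0)) (h1 : CLAProves ax (F :: Γ) (F.subst x (tS (tv x)))) :
    CLAProves ax Γ (.call x F) :=
  ⟨.ci Γ F x hx h0.some h1.some⟩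

variable {lang : Fml → Prop}

theorem claProves_add (hΓ : ∀ E ∈ Γ, ¬ E.mentionsVar 3) :
    CLAProves (IsCLAAx lang) Γ (.call 3 addFml) := by
  have base : CLAProves (IsCLAAx lang) Γ (.call 4 (.cex 5 (fEq (tPlus (tv 4) t0) (tv 5)))) :=
    .lc cl12Proves_add_zero (by simpa using .axm (.inl .a3))
  have step : CLAProves (IsCLAAx lang) (addFml :: Γ)
      (.call 4 (.cex 5 (fEq (tPlus (tv 4) (tS (tv 3))) (tv 5)))) :=
    .lc cl12Proves_add_succ (by simpa using ⟨.hyp (by simp), .axm (.inl .a4), .axm (.inr rfl)⟩)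
  exact .ci hΓ (by simpa [addFml] using base) (by simpa [addFml] using step)

theorem claProves_mul : CLAProves (IsCLAAx lang) [] (.call 0 mulFml) := by
  have base : CLAProves (IsCLAAx lang) [] (.call 1 (.cex 2 (fEq (tTimes (tv 1) t0) (tv 2)))) :=
    .lc cl12Proves_mul_zero (by simpa using .axm (.inl .a5))
  have step : CLAProves (IsCLAAx lang) [mulFml]
      (.call 1 (.cex 2 (fEq (tTimes (tv 1) (tS (tv 0))) (tv 2)))) :=
    .lc cl12Proves_mul_succ <| by
      simpa using ⟨.hyp (by simp), claProves_add (by simp [mulFml, Fml.mentionsVar]),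
        .axm (.inl .a6)⟩
  exact .ci (by simp) (by simpa [mulFml] using base) (by simpa [mulFml] using step)

end Deductions

/-- CLA1 proves `⊓x⊓y⊔z (y × x = z)`: the problem of computing the
product of any two natural numbers. -/
theorem cla1_proves_product :
    CLAProves CLA1Ax []
      (.call 0 (.call 1 (.cex 2 (fEq (tTimes (tv 1) (tv 0)) (tv 2))))) :=
  claProves_mul

end

end CoL
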